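/- In the free group on three generators x₁, x₂, x₃, with γ₁₂ = x₁, γ₂₃ = x₂, γ₃₁ = x₂⁻¹ x₁⁻¹, the product γ₂₃ γ₁₂ γ₃₁ γ₂₃ γ₁₂ γ₃₁ equals (x₂ x₁ x₂⁻¹ x₁⁻¹)², and this element is nontrivial. -/
import Mathlib


theorem stmt_18 (x : Fin 3 → FreeGroup (Fin 3))
    (hx : ∀ i, x i = FreeGroup.of i)
    (γ₁₂ γ₂₃ γ₃₁ : FreeGroup (Fin 3))
    (h12 : γ₁₂ = x 0) (h23 : γ₂₃ = x 1) (h31 : γ₃₁ = (x 1)⁻¹ * (x 0)⁻¹) :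
    γ₂₃ * γ₁₂ * γ₃₁ * γ₂₃ * γ₁₂ * γ₃₁ =
      (x 1 * x 0 * (x 1)⁻¹ * (x 0)⁻¹) ^ 2 ∧
    γ₂₃ * γ₁₂ * γ₃₁ * γ₂₃ * γ₁₂ * γ₃₁ ≠ 1 := by
  subst h12 h23 h31
  rw [hx 0, hx 1]
  constructor
  · rw [sq]; group
  · have : (FreeGroup.of (1:Fin 3) * FreeGroup.of 0 * (FreeGroup.of 1)⁻¹ *
        (FreeGroup.of 0)⁻¹) ^ 2 ≠ 1 := by decide
    intro h
    apply this
    rw [← h]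
    rw [sq]; group
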